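/- arXiv:1408.2117 — 2 statements merged into one kernel-verified Lean document; each statement's English description precedes it below -/
import Mathlib

section
/- Let T be a stable tree marked by X, let v and v' be two vertices of T joined by a path, with e the edge at v on the path [v,v'] and e' the edge at v' on this path. Then for every edge e'' at v' other than e', the set B_{v'}(e'') ∩ X is a strict subset of B_v(e) ∩ X. -/
open SimpleGraph

/-- The branch of a vertex `v` in the direction of a neighbor `u`. -/
def Branch {V : Type*} (G : SimpleGraph V) (v u : V) : Set V :=
  {w | ∃ p : G.Walk u w, v ∉ p.support}

/-- A stable combinatorial tree marked by `X`. -/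
structure MarkedStableTree (X V : Type*) (G : SimpleGraph V) (m : X → V) : Prop where
  tree : G.IsTree
  inj : Function.Injective m
  leaf_iff : ∀ v, (G.neighborSet v).ncard = 1 ↔ v ∈ Set.range m
  stable : ∀ v, v ∉ Set.range m → 3 ≤ (G.neighborSet v).ncard

/-!
Going from `v` along the path to `v'` and then out through any edge `e'' ≠ e'` never turns
back, so `B_{v'}(e'') ⊆ B_v(e)`. Since `v'` has two distinct neighbours it is not a leaf, hence
unmarked, hence of valence at least three: a third edge at `v'` leads to a branch which lies in
`B_v(e)`, is disjoint from `B_{v'}(e'')`, and, like every branch, ends in a leaf, i.e. a marked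
point.
-/

namespace SimpleGraph

variable {V : Type*} {G : SimpleGraph V}

lemma mem_branch_self {v u : V} (h : v ≠ u) : u ∈ Branch G v u :=
  ⟨Walk.nil, by simp [h]⟩

lemma notMem_branch_self (v u : V) : v ∉ Branch G v u :=
  fun ⟨q, hq⟩ => hq q.end_mem_support

lemma mem_branch_iff_exists_isPath {c u z : V} (hu : G.Adj c u) :
    z ∈ Branch G c u ↔ ∃ q : G.Walk c z, q.IsPath ∧ q.snd = u := by
  classical
  constructor
  · rintro ⟨q, hq⟩
    refine ⟨Walk.cons hu q.bypass, ?_, Walk.snd_cons _ _⟩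
    exact Walk.cons_isPath_iff _ _ |>.mpr
      ⟨q.bypass_isPath, fun h => hq (q.support_bypass_subset_support h)⟩
  · rintro ⟨q, hq, hsnd⟩
    cases q with
    | nil => exact absurd hsnd hu.ne
    | cons h q =>
      rw [← hsnd, Walk.snd_cons]
      exact ⟨q, ((Walk.cons_isPath_iff _ _).mp hq).2⟩

lemma Walk.IsPath.end_mem_branch_snd {a b : V} {p : G.Walk a b} (hp : p.IsPath) (hab : a ≠ b) :
    b ∈ Branch G a p.snd :=
  (mem_branch_iff_exists_isPath (p.adj_snd (Walk.not_nil_of_ne hab))).mpr ⟨p, hp, rfl⟩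

lemma IsAcyclic.eq_of_mem_branch (hG : G.IsAcyclic) {c u w z : V} (hu : G.Adj c u)
    (hw : G.Adj c w) (hzu : z ∈ Branch G c u) (hzw : z ∈ Branch G c w) : u = w := by
  obtain ⟨q, hq, rfl⟩ := (mem_branch_iff_exists_isPath hu).mp hzu
  obtain ⟨q', hq', rfl⟩ := (mem_branch_iff_exists_isPath hw).mp hzw
  have : q = q' := congrArg Subtype.val ((hG.subsingleton_path c z).elim ⟨q, hq⟩ ⟨q', hq'⟩)
  rw [this]

lemma branch_subset_branch {v s c u : V} (hcu : G.Adj c u) (hc : c ∈ Branch G v s)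
    (hv : v ∉ Branch G c u) (hvc : v ≠ c) : Branch G c u ⊆ Branch G v s := by
  classical
  rintro z ⟨q, hq⟩
  obtain ⟨r, hr⟩ := hc
  refine ⟨r.append (Walk.cons hcu q), ?_⟩
  rw [Walk.mem_support_append_iff, Walk.support_cons, List.mem_cons]
  rintro (hvr | rfl | hvq)
  · exact hr hvr
  · exact hvc rfl
  · exact hv ⟨q.takeUntil v hvq, fun h => hq (q.support_takeUntil_subset_support hvq h)⟩

lemma IsAcyclic.branch_ssubset_branch (hG : G.IsAcyclic) {c u b : V} (hcu : G.Adj c u)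
    (hub : G.Adj u b) (hbc : b ≠ c) : Branch G u b ⊂ Branch G c u := by
  have hc : c ∉ Branch G u b := fun hcb =>
    hbc (hG.eq_of_mem_branch hub hcu.symm hcb (mem_branch_self hcu.ne'))
  refine ⟨branch_subset_branch hub (mem_branch_self hcu.ne) hc hcu.ne, fun hsup => ?_⟩
  exact notMem_branch_self u b (hsup (mem_branch_self hcu.ne))

lemma IsAcyclic.exists_ncard_neighborSet_eq_one_mem_branch [Finite V] (hG : G.IsAcyclic)
    {c u : V} (hcu : G.Adj c u) : ∃ z ∈ Branch G c u, (G.neighborSet z).ncard = 1 := by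
  induction hn : (Branch G c u).ncard using Nat.strong_induction_on generalizing c u with
  | _ n ih =>
    by_cases hdeg : (G.neighborSet u).ncard = 1
    · exact ⟨u, mem_branch_self hcu.ne, hdeg⟩
    have hpos : (G.neighborSet u).ncard ≠ 0 :=
      (Set.ncard_pos (Set.toFinite _)).mpr ⟨c, hcu.symm⟩ |>.ne'
    have hgt : 1 < (G.neighborSet u).ncard := by omega
    obtain ⟨b, hub, hbc⟩ := Set.exists_ne_of_one_lt_ncard hgt c
    have hss := hG.branch_ssubset_branch hcu hub hbc
    obtain ⟨z, hz, hzdeg⟩ := ih _ (hn ▸ Set.ncard_lt_ncard hss) hub rfl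
    exact ⟨z, hss.subset hz, hzdeg⟩

lemma IsAcyclic.branch_subset_branch_snd (hG : G.IsAcyclic) {v v' u : V} {p : G.Walk v v'}
    (hp : p.IsPath) (hne : v ≠ v') (hu : G.Adj v' u) (hupen : u ≠ p.penultimate) :
    Branch G v' u ⊆ Branch G v p.snd := by
  have hpen : G.Adj v' p.penultimate := (p.adj_penultimate (Walk.not_nil_of_ne hne)).symm
  have hv : v ∈ Branch G v' p.penultimate :=
    p.snd_reverse ▸ hp.reverse.end_mem_branch_snd hne.symm
  exact branch_subset_branch hu (hp.end_mem_branch_snd hne)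
    (fun hvu => hupen (hG.eq_of_mem_branch hu hpen hvu hv)) hne

end SimpleGraph

namespace MarkedStableTree

variable {X V : Type*} {G : SimpleGraph V} {m : X → V}

lemma exists_mem_branch [Finite V] (h : MarkedStableTree X V G m) {c u : V} (hcu : G.Adj c u) :
    ∃ x, m x ∈ Branch G c u := by
  obtain ⟨z, hz, hleaf⟩ := h.tree.isAcyclic.exists_ncard_neighborSet_eq_one_mem_branch hcu
  obtain ⟨x, rfl⟩ := (h.leaf_iff z).mp hleaf
  exact ⟨x, hz⟩

lemma three_le_ncard_neighborSet [Finite V] (h : MarkedStableTree X V G m) {v a b : V}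
    (ha : G.Adj v a) (hb : G.Adj v b) (hab : a ≠ b) : 3 ≤ (G.neighborSet v).ncard := by
  have htwo : 2 ≤ (G.neighborSet v).ncard := by
    rw [← Set.ncard_pair hab]
    exact Set.ncard_le_ncard (Set.pair_subset ha hb)
  exact h.stable v fun hv => by have := (h.leaf_iff v).mpr hv; omega

end MarkedStableTree

theorem branch_trace_strict_mono_path_general {X V : Type*} [Finite V]
    (G : SimpleGraph V) (m : X → V) (h : MarkedStableTree X V G m)
    (v v' : V) (hne : v ≠ v')
    (p : G.Walk v v') (hp : p.IsPath)
    (w : V) (hw : G.Adj v' w) (hwne : w ≠ p.getVert (p.length - 1)) :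
    {x : X | m x ∈ Branch G v' w} ⊂ {x : X | m x ∈ Branch G v (p.getVert 1)} := by
  have hG := h.tree.isAcyclic
  have hpen : G.Adj v' p.penultimate := (p.adj_penultimate (Walk.not_nil_of_ne hne)).symm
  have hsub {u : V} (hu : G.Adj v' u) (hupen : u ≠ p.penultimate) :=
    hG.branch_subset_branch_snd hp hne hu hupen
  obtain ⟨u, hu, hu'⟩ : ∃ u ∈ G.neighborSet v', u ∉ ({w, p.penultimate} : Set V) :=
    Set.exists_mem_notMem_of_ncard_lt_ncard <| calc
      ({w, p.penultimate} : Set V).ncard ≤ 2 := (Set.ncard_pair hwne).le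
      _ < (G.neighborSet v').ncard := h.three_le_ncard_neighborSet hw hpen hwne
  obtain ⟨huw, hupen⟩ : u ≠ w ∧ u ≠ p.penultimate := by simpa [not_or] using hu'
  obtain ⟨x, hx⟩ := h.exists_mem_branch hu
  refine (Set.ssubset_iff_of_subset (Set.preimage_mono (f := m) (hsub hw hwne))).mpr ?_
  exact ⟨x, hsub hu hupen hx, fun hxw => huw (hG.eq_of_mem_branch hu hw hx hxw)⟩

/-- let `v` and `v'` be distinct vertices of a stable tree marked by `X`,
joined by a path `p`; let `e` be the edge at `v` on this path (towards `p.getVert 1`) and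
`e'` the edge at `v'` on this path (towards `p.getVert (p.length - 1)`). Then for every
edge at `v'` other than `e'` (towards a neighbor `w ≠ p.getVert (p.length - 1)`),
`B_{v'}(e'') ∩ X` is a strict subset of `B_v(e) ∩ X`. -/
theorem branch_trace_strict_mono_path {X V : Type*} [Finite X] [Finite V]
    (G : SimpleGraph V) (m : X → V) (h : MarkedStableTree X V G m)
    (hX : 3 ≤ Nat.card X) (v v' : V) (hne : v ≠ v')
    (p : G.Walk v v') (hp : p.IsPath)
    (w : V) (hw : G.Adj v' w) (hwne : w ≠ p.getVert (p.length - 1)) :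
    {x : X | m x ∈ Branch G v' w} ⊂ {x : X | m x ∈ Branch G v (p.getVert 1)} :=
  branch_trace_strict_mono_path_general G m h v v' hne p hp w hw hwne
end

section
/- In the graph T constructed from an admissible set of partitions 𝒫 of X (vertices 𝒫 ∪ X, with edges as in the plumbing construction), for every x ∈ X every vertex v1 ≠ x can be connected to x by a unique path; moreover, if the first edge of this path is {P1, P2} with P1, P2 ∈ 𝒫, then the block of P1 in the direction of the path contains x. -/
open SimpleGraph

/-- Admissibility of a set of partitions of `X`. -/
def Admissible {X : Type*} (Ps : Set (Set (Set X))) : Prop :=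
  (∀ P ∈ Ps, 3 ≤ P.ncard) ∧
  (∀ P ∈ Ps, ∀ B ∈ P, (∃ x : X, B = {x}) ∨ ∃ P' ∈ Ps, Bᶜ ∈ P') ∧
  (∀ P ∈ Ps, ∀ P' ∈ Ps, P ≠ P' → P ∩ P' = ∅)

/-- The plumbing graph associated to a set `Ps` of partitions of `X`. -/
def plumbingGraph {X : Type*} (Ps : Set (Set (Set X))) :
    SimpleGraph ({P // P ∈ Ps} ⊕ X) :=
  SimpleGraph.fromRel (fun v w =>
    match v, w with
    | Sum.inl P1, Sum.inl P2 =>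
        ∃ B1 ∈ (P1 : Set (Set X)), ∃ B2 ∈ (P2 : Set (Set X)),
          B1 ∪ B2 = Set.univ ∧ B1 ∩ B2 = ∅
    | Sum.inl P, Sum.inr x => ({x} : Set X) ∈ (P : Set (Set X))
    | Sum.inr _, _ => False)

/-!
Orient every edge towards the leaf `x`. A path from a partition `P` to `x` must leave `P` through
the block of `P` containing `x`: if it left through another block `B`, it would enter the next
partition `Q` through its block `Bᶜ ∋ x`, hence (inductively) leave `Q` through `Bᶜ` again, and the
only vertex beyond that block of `Q` is `P` itself. Since a block determines the neighbour beyond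
it, the next vertex of every path to `x` is forced, which gives uniqueness. Existence follows by
descent: the block containing `x` strictly shrinks when we step across its complement.
-/

namespace Setoid.IsPartition

variable {α : Type*} {c : Set (Set α)}

theorem eq_of_mem_of_mem (hc : IsPartition c) {B C : Set α} {a : α} (hB : B ∈ c) (hC : C ∈ c)
    (haB : a ∈ B) (haC : a ∈ C) : B = C :=
  (hc.2 a).unique ⟨hB, haB⟩ ⟨hC, haC⟩

theorem subset_compl_of_ne (hc : IsPartition c) {B C : Set α} (hB : B ∈ c) (hC : C ∈ c)
    (hne : B ≠ C) : C ⊆ Bᶜ :=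
  Set.subset_compl_iff_disjoint_left.2 (hc.pairwiseDisjoint hB hC hne)

theorem compl_notMem (hc : IsPartition c) (h3 : 3 ≤ c.ncard) {B : Set α} (hB : B ∈ c) :
    Bᶜ ∉ c := by
  intro hBc
  have hsub : c ⊆ {B, Bᶜ} := by
    intro C hC
    by_contra hne
    simp only [Set.mem_insert_iff, Set.mem_singleton_iff, not_or] at hne
    obtain ⟨a, ha⟩ := nonempty_of_mem_partition hc hC
    have hB' := hc.subset_compl_of_ne hBc hC (Ne.symm hne.2)
    rw [compl_compl] at hB'
    exact hc.subset_compl_of_ne hB hC (Ne.symm hne.1) ha (hB' ha)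
  have h2 : ({B, Bᶜ} : Set (Set α)).ncard ≤ 2 :=
    (Set.ncard_insert_le _ _).trans (by rw [Set.ncard_singleton])
  have := (Set.ncard_le_ncard hsub (Set.toFinite _)).trans h2
  omega

theorem compl_singleton_notMem (hc : IsPartition c) (h3 : 3 ≤ c.ncard) (a : α) :
    ({a}ᶜ : Set α) ∉ c := by
  intro ha
  obtain ⟨C, ⟨hC, haC⟩, -⟩ := hc.2 a
  have hCa : C = {a} := by
    refine (Set.Nonempty.subset_singleton_iff ⟨a, haC⟩).1 ?_
    simpa using hc.subset_compl_of_ne ha hC (by rintro rfl; simp at haC)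
  exact hc.compl_notMem h3 (hCa ▸ hC) ha

end Setoid.IsPartition

theorem SimpleGraph.Walk.IsPath.ne_of_cons_cons {V : Type*} {G : SimpleGraph V} {u v w y : V}
    {h : G.Adj u v} {h' : G.Adj v w} {t : G.Walk w y} (hp : (cons h (cons h' t)).IsPath) :
    u ≠ w := by
  rintro rfl
  exact ((cons_isPath_iff _ _).1 hp).2 (by simp)

theorem Admissible.eq_of_mem_of_mem {X : Type*} {Ps : Set (Set (Set X))} (hadm : Admissible Ps)
    {P Q : {P // P ∈ Ps}} {B : Set X} (hP : B ∈ (P : Set (Set X))) (hQ : B ∈ (Q : Set (Set X))) :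
    P = Q := by
  by_contra hne
  have hdisj := hadm.2.2 P P.2 Q Q.2 (Subtype.coe_ne_coe.2 hne)
  exact Set.eq_empty_iff_forall_notMem.1 hdisj B ⟨hP, hQ⟩

namespace plumbingGraph

variable {X : Type*} {Ps : Set (Set (Set X))}

theorem adj_inl_inl_iff {P Q : {P // P ∈ Ps}} :
    (plumbingGraph Ps).Adj (.inl P) (.inl Q) ↔
      P ≠ Q ∧ ∃ B ∈ (P : Set (Set X)), Bᶜ ∈ (Q : Set (Set X)) := by
  have hcompl : ∀ B₁ B₂ : Set X, B₁ ∪ B₂ = Set.univ ∧ B₁ ∩ B₂ = ∅ ↔ B₂ = B₁ᶜ := by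
    intro B₁ B₂
    rw [eq_compl_iff_isCompl, isCompl_comm, isCompl_iff, Set.disjoint_iff_inter_eq_empty,
      codisjoint_iff, and_comm]
    rfl
  simp only [plumbingGraph, fromRel_adj, ne_eq, Sum.inl.injEq, hcompl, exists_eq_right]
  refine and_congr_right fun _ => ⟨?_, Or.inl⟩
  rintro (h | ⟨B, hB, hBc⟩)
  · exact h
  · exact ⟨Bᶜ, hBc, by rwa [compl_compl]⟩

theorem adj_inl_inr_iff {P : {P // P ∈ Ps}} {y : X} :
    (plumbingGraph Ps).Adj (.inl P) (.inr y) ↔ ({y} : Set X) ∈ (P : Set (Set X)) := by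
  simp [plumbingGraph]

theorem adj_inr_inl_iff {P : {P // P ∈ Ps}} {y : X} :
    (plumbingGraph Ps).Adj (.inr y) (.inl P) ↔ ({y} : Set X) ∈ (P : Set (Set X)) := by
  rw [adj_comm, adj_inl_inr_iff]

theorem not_adj_inr_inr {y z : X} : ¬(plumbingGraph Ps).Adj (.inr y) (.inr z) := by
  simp [plumbingGraph]

theorem adj_inr_eq (hadm : Admissible Ps) {y : X} {u u' : {P // P ∈ Ps} ⊕ X}
    (h : (plumbingGraph Ps).Adj (.inr y) u) (h' : (plumbingGraph Ps).Adj (.inr y) u') :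
    u = u' := by
  rcases u with Q | z
  · rcases u' with Q' | z'
    · exact congrArg _ (hadm.eq_of_mem_of_mem (adj_inr_inl_iff.1 h) (adj_inr_inl_iff.1 h'))
    · exact (not_adj_inr_inr h').elim
  · exact (not_adj_inr_inr h).elim

theorem reachable_inl_inr [Finite X] (hpart : ∀ P ∈ Ps, Setoid.IsPartition P)
    (hadm : Admissible Ps) (P : {P // P ∈ Ps}) (x : X) :
    (plumbingGraph Ps).Reachable (.inl P) (.inr x) := by
  obtain ⟨B, ⟨hB, hxB⟩, -⟩ := (hpart P P.2).2 x
  induction B using WellFoundedLT.induction generalizing P with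
  | _ B ih =>
  by_cases hBx : B = {x}
  · exact (adj_inl_inr_iff.2 (hBx ▸ hB)).reachable
  obtain ⟨Q, hBQ⟩ : ∃ Q : {P // P ∈ Ps}, Bᶜ ∈ (Q : Set (Set X)) := by
    rcases hadm.2.1 P P.2 B hB with ⟨z, rfl⟩ | ⟨Q, hQ, hBQ⟩
    · exact (hBx (by rw [Set.mem_singleton_iff.1 hxB])).elim
    · exact ⟨⟨Q, hQ⟩, hBQ⟩
  obtain ⟨C, ⟨hC, hxC⟩, -⟩ := (hpart Q Q.2).2 x
  have hCB : C ⊆ B := by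
    simpa using (hpart Q Q.2).subset_compl_of_ne hBQ hC (by rintro rfl; exact hxC hxB)
  have hCB' : C ≠ B := by
    rintro rfl
    exact (hpart Q Q.2).compl_notMem (hadm.1 Q Q.2) hBQ (by rwa [compl_compl])
  have hPQ : P ≠ Q := by
    rintro rfl
    exact (hpart P P.2).compl_notMem (hadm.1 P P.2) hB hBQ
  exact (adj_inl_inl_iff.2 ⟨hPQ, B, hB, hBQ⟩).reachable.trans
    (ih C (hCB.ssubset_of_ne hCB') Q hC hxC)

theorem reachable_inr [Finite X] (hne : Ps.Nonempty) (hpart : ∀ P ∈ Ps, Setoid.IsPartition P)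
    (hadm : Admissible Ps) (v : {P // P ∈ Ps} ⊕ X) (x : X) :
    (plumbingGraph Ps).Reachable v (.inr x) := by
  rcases v with P | y
  · exact reachable_inl_inr hpart hadm P x
  · obtain ⟨P, hP⟩ := hne
    exact (reachable_inl_inr hpart hadm ⟨P, hP⟩ y).symm.trans
      (reachable_inl_inr hpart hadm ⟨P, hP⟩ x)

/-- For a block `B` of a partition `P`, the neighbour `u` of `P` is joined to it through `B`. -/
def LiesBeyond (B : Set X) : {P // P ∈ Ps} ⊕ X → Prop
  | .inl Q => Bᶜ ∈ (Q : Set (Set X))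
  | .inr z => B = {z}

theorem exists_liesBeyond_of_adj {P : {P // P ∈ Ps}} {u : {P // P ∈ Ps} ⊕ X}
    (h : (plumbingGraph Ps).Adj (.inl P) u) : ∃ B ∈ (P : Set (Set X)), LiesBeyond B u := by
  rcases u with Q | z
  · exact (adj_inl_inl_iff.1 h).2
  · exact ⟨{z}, adj_inl_inr_iff.1 h, rfl⟩

theorem LiesBeyond.eq (hpart : ∀ P ∈ Ps, Setoid.IsPartition P) (hadm : Admissible Ps)
    {B : Set X} {u u' : {P // P ∈ Ps} ⊕ X} (hu : LiesBeyond B u) (hu' : LiesBeyond B u') :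
    u = u' := by
  have compl_singleton_notMem (Q : {P // P ∈ Ps}) (z : X) : ({z}ᶜ : Set X) ∉ Q.1 :=
    (hpart Q Q.2).compl_singleton_notMem (hadm.1 Q Q.2) z
  rcases u with Q | z <;> rcases u' with Q' | z' <;> simp only [LiesBeyond] at hu hu'
  · exact congrArg _ (hadm.eq_of_mem_of_mem hu hu')
  · exact (compl_singleton_notMem Q z' (hu' ▸ hu)).elim
  · exact (compl_singleton_notMem Q' z (hu ▸ hu')).elim
  · exact congrArg _ (Set.singleton_eq_singleton_iff.1 (hu.symm.trans hu'))

variable {x : X}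

/-- A leaf has a single neighbour, so it can only be the last vertex of a path. -/
theorem eq_of_isPath_cons_inr (hadm : Admissible Ps) {v : {P // P ∈ Ps} ⊕ X} {z : X}
    {h : (plumbingGraph Ps).Adj v (.inr z)} {t : (plumbingGraph Ps).Walk (.inr z) (.inr x)}
    (hp : (Walk.cons h t).IsPath) : z = x := by
  cases t with
  | nil => rfl
  | cons h' t' => exact (hp.ne_of_cons_cons (adj_inr_eq hadm h.symm h')).elim

theorem mem_of_isPath_cons (hpart : ∀ P ∈ Ps, Setoid.IsPartition P) (hadm : Admissible Ps) :
    ∀ {P : {P // P ∈ Ps}} {u : {P // P ∈ Ps} ⊕ X} {h : (plumbingGraph Ps).Adj (.inl P) u}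
      {t : (plumbingGraph Ps).Walk u (.inr x)}, (Walk.cons h t).IsPath →
      ∀ {B : Set X}, B ∈ (P : Set (Set X)) → LiesBeyond B u → x ∈ B
  | _, .inr _, _, _, hp, _, _, hu => by
    obtain rfl := eq_of_isPath_cons_inr hadm hp
    exact hu ▸ rfl
  | P, .inl Q, _, .cons h' _, hp, B, hB, hu => by
    obtain ⟨C, hC, hw⟩ := exists_liesBeyond_of_adj h'
    have hxC := mem_of_isPath_cons hpart hadm hp.of_cons hC hw
    by_contra hxB
    have hCB : C = Bᶜ := (hpart Q Q.2).eq_of_mem_of_mem hC hu hxC hxB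
    have hP : LiesBeyond Bᶜ (.inl P) := by simpa [LiesBeyond] using hB
    exact hp.ne_of_cons_cons ((hCB ▸ hw).eq hpart hadm hP).symm

theorem eq_of_isPath_cons_of_isPath_cons (hpart : ∀ P ∈ Ps, Setoid.IsPartition P)
    (hadm : Admissible Ps) {v u u' : {P // P ∈ Ps} ⊕ X} {h : (plumbingGraph Ps).Adj v u}
    {h' : (plumbingGraph Ps).Adj v u'} {t : (plumbingGraph Ps).Walk u (.inr x)}
    {t' : (plumbingGraph Ps).Walk u' (.inr x)} (hp : (Walk.cons h t).IsPath)
    (hq : (Walk.cons h' t').IsPath) : u = u' := by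
  rcases v with P | y
  · obtain ⟨B, hB, hu⟩ := exists_liesBeyond_of_adj h
    obtain ⟨B', hB', hu'⟩ := exists_liesBeyond_of_adj h'
    have hBB' : B = B' := (hpart P P.2).eq_of_mem_of_mem hB hB'
      (mem_of_isPath_cons hpart hadm hp hB hu) (mem_of_isPath_cons hpart hadm hq hB' hu')
    exact (hBB' ▸ hu).eq hpart hadm hu'
  · exact adj_inr_eq hadm h h'

theorem isPath_unique (hpart : ∀ P ∈ Ps, Setoid.IsPartition P) (hadm : Admissible Ps) :
    ∀ {v : {P // P ∈ Ps} ⊕ X} {p q : (plumbingGraph Ps).Walk v (.inr x)},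
      p.IsPath → q.IsPath → p = q
  | _, .nil, _, _, hq => (Walk.isPath_iff_nil.1 hq).eq_nil.symm
  | _, .cons _ _, .nil, hp, _ => (Walk.not_nil_cons (Walk.isPath_iff_nil.1 hp)).elim
  | _, .cons _ _, .cons _ _, hp, hq => by
    obtain rfl := eq_of_isPath_cons_of_isPath_cons hpart hadm hp hq
    rw [isPath_unique hpart hadm hp.of_cons hq.of_cons]

end plumbingGraph

open plumbingGraph in
theorem plumbing_unique_path_general {X : Type*} [Finite X]
    (Ps : Set (Set (Set X))) (hne : Ps.Nonempty)
    (hpart : ∀ P ∈ Ps, Setoid.IsPartition P) (hadm : Admissible Ps)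
    (x : X) (v1 : {P // P ∈ Ps} ⊕ X) :
    (∃! p : (plumbingGraph Ps).Walk v1 (Sum.inr x), p.IsPath) ∧
    (∀ (P1 P2 : {P // P ∈ Ps}) (p : (plumbingGraph Ps).Walk v1 (Sum.inr x)),
      p.IsPath → v1 = Sum.inl P1 → p.getVert 1 = Sum.inl P2 →
      ∃ B1 ∈ (P1 : Set (Set X)), ∃ B2 ∈ (P2 : Set (Set X)),
        B1 ∩ B2 = ∅ ∧ B1 ∪ B2 = Set.univ ∧ x ∈ B1) := by
  refine ⟨?_, ?_⟩
  · obtain ⟨p, hp⟩ := (reachable_inr hne hpart hadm v1 x).exists_isPath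
    exact ⟨p, hp, fun q hq => isPath_unique hpart hadm hq hp⟩
  · rintro P1 P2 p hp rfl hP2
    obtain _ | ⟨h, t⟩ := p
    rw [Walk.getVert_cons_succ, Walk.getVert_zero] at hP2
    subst hP2
    obtain ⟨-, B, hB, hBc⟩ := adj_inl_inl_iff.1 h
    exact ⟨B, hB, Bᶜ, hBc, Set.inter_compl_self B, Set.union_compl_self B,
      mem_of_isPath_cons hpart hadm hp hB hBc⟩

/-- in the plumbing graph of a (nonempty) admissible set of partitions `Ps`
of `X`, every vertex `v1 ≠ x` is connected to the leaf `x ∈ X` by a unique path;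
moreover if the first edge of this path joins two partitions `P1` and `P2`, then the
block of `P1` in the direction of the path (the one whose complement is the
complementary block of `P2` witnessing the edge) contains `x`. -/
theorem plumbing_unique_path {X : Type*} [Finite X] (hX : 3 ≤ Nat.card X)
    (Ps : Set (Set (Set X))) (hne : Ps.Nonempty)
    (hpart : ∀ P ∈ Ps, Setoid.IsPartition P) (hadm : Admissible Ps)
    (x : X) (v1 : {P // P ∈ Ps} ⊕ X) (hv : v1 ≠ Sum.inr x) :
    (∃! p : (plumbingGraph Ps).Walk v1 (Sum.inr x), p.IsPath) ∧
    (∀ (P1 P2 : {P // P ∈ Ps}) (p : (plumbingGraph Ps).Walk v1 (Sum.inr x)),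
      p.IsPath → v1 = Sum.inl P1 → p.getVert 1 = Sum.inl P2 →
      ∃ B1 ∈ (P1 : Set (Set X)), ∃ B2 ∈ (P2 : Set (Set X)),
        B1 ∩ B2 = ∅ ∧ B1 ∪ B2 = Set.univ ∧ x ∈ B1) :=
  plumbing_unique_path_general Ps hne hpart hadm x v1
end
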